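/- arXiv:1304.7804 — 3 statements merged into one kernel-verified Lean document; each statement's English description precedes it below -/
import Mathlib

section
/- Let S be a finite set with |S| ≥ 2, let Υ be any hierarchical division of S, and let 𝒞 be any partition of S other than the trivial partition {S}. Then there exist distinct parts C₁, C₂ ∈ 𝒞 and subsets C′₁ ⊆ C₁ and C′₂ ⊆ C₂ such that C′₁ and C′₂ are siblings in Υ (i.e., they are the sets represented by the two children of some internal node of Υ). -/
/-- A full binary tree with leaves labeled by elements of `X`. -/
inductive BTree (X : Type) where
  | leaf : X → BTree X
  | node : BTree X → BTree X → BTree X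

/-- The set represented by a node of the tree: the set of labels of its leaves. -/
def BTree.leaves {X : Type} [DecidableEq X] : BTree X → Finset X
  | .leaf x => {x}
  | .node l r => l.leaves ∪ r.leaves

/-- Every internal node's set is the *disjoint* union of its children's sets. -/
def BTree.DisjointLeaves {X : Type} [DecidableEq X] : BTree X → Prop
  | .leaf _ => True
  | .node l r => Disjoint l.leaves r.leaves ∧ l.DisjointLeaves ∧ r.DisjointLeaves

/-- `s` occurs as a subtree of `t`. -/
inductive BTree.IsSubtree {X : Type} : BTree X → BTree X → Prop where
  | refl (t : BTree X) : IsSubtree t t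
  | left {s l r : BTree X} : IsSubtree s l → IsSubtree s (.node l r)
  | right {s l r : BTree X} : IsSubtree s r → IsSubtree s (.node l r)

/-- `𝒞` is a partition of the finite set `S`: pairwise disjoint nonempty parts
whose union is `S`. -/
def IsPartitionOf {X : Type} [DecidableEq X] (𝒞 : Finset (Finset X)) (S : Finset X) : Prop :=
  (∀ C ∈ 𝒞, C.Nonempty) ∧
  (∀ C₁ ∈ 𝒞, ∀ C₂ ∈ 𝒞, C₁ ≠ C₂ → Disjoint C₁ C₂) ∧
  𝒞.sup id = S

/-! Since `𝒞 ≠ {S}`, the root is not contained in a single part. Follow the tree down from the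
root, always entering a child whose leaves are not contained in a single part. Leaves lie in a single part, so the descent stops at a node both of whose
children lie in a single part; these parts differ, since otherwise the node itself would. -/

namespace BTree

theorem exists_sibling_subsets_of_not_subset {X : Type} [DecidableEq X] (𝒞 : Finset (Finset X)) :
    ∀ t : BTree X, t.leaves ⊆ 𝒞.sup id → (¬ ∃ C ∈ 𝒞, t.leaves ⊆ C) →
      ∃ C₁ ∈ 𝒞, ∃ C₂ ∈ 𝒞, C₁ ≠ C₂ ∧
        ∃ l r : BTree X, (node l r).IsSubtree t ∧ l.leaves ⊆ C₁ ∧ r.leaves ⊆ C₂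
  | leaf x, hcover, hsplit => by
    obtain ⟨C, hC, hxC⟩ := Finset.mem_sup.mp (hcover (Finset.mem_singleton_self x))
    exact absurd ⟨C, hC, Finset.singleton_subset_iff.mpr hxC⟩ hsplit
  | node l r, hcover, hsplit => by
    have hcover_l := Finset.subset_union_left.trans hcover
    have hcover_r := Finset.subset_union_right.trans hcover
    by_cases hl : ∃ C ∈ 𝒞, l.leaves ⊆ C
    · by_cases hr : ∃ C ∈ 𝒞, r.leaves ⊆ C
      · obtain ⟨C₁, hC₁, hl₁⟩ := hl
        obtain ⟨C₂, hC₂, hr₂⟩ := hr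
        have hC₁₂ : C₁ ≠ C₂ := by
          rintro rfl
          exact hsplit ⟨C₁, hC₁, Finset.union_subset hl₁ hr₂⟩
        exact ⟨C₁, hC₁, C₂, hC₂, hC₁₂, l, r, .refl _, hl₁, hr₂⟩
      · obtain ⟨C₁, hC₁, C₂, hC₂, hC₁₂, l', r', hsub, h₁, h₂⟩ :=
          exists_sibling_subsets_of_not_subset 𝒞 r hcover_r hr
        exact ⟨C₁, hC₁, C₂, hC₂, hC₁₂, l', r', hsub.right, h₁, h₂⟩
    · obtain ⟨C₁, hC₁, C₂, hC₂, hC₁₂, l', r', hsub, h₁, h₂⟩ :=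
        exists_sibling_subsets_of_not_subset 𝒞 l hcover_l hl
      exact ⟨C₁, hC₁, C₂, hC₂, hC₁₂, l', r', hsub.left, h₁, h₂⟩

end BTree

theorem IsPartitionOf.eq_singleton_of_subset {X : Type} [DecidableEq X]
    {𝒞 : Finset (Finset X)} {S C : Finset X} (hpart : IsPartitionOf 𝒞 S) (hC : C ∈ 𝒞)
    (hSC : S ⊆ C) : 𝒞 = {S} := by
  obtain ⟨hnonempty, hdisj, hsup⟩ := hpart
  have hle : ∀ D ∈ 𝒞, D ⊆ S := fun D hD => hsup ▸ Finset.le_sup (f := id) hD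
  obtain rfl : C = S := (hle C hC).antisymm hSC
  refine Finset.eq_singleton_iff_unique_mem.mpr ⟨hC, fun D hD => ?_⟩
  by_contra hDC
  obtain ⟨x, hx⟩ := hnonempty D hD
  exact Finset.disjoint_left.mp (hdisj D hD C hC hDC) hx (hle D hD hx)

theorem hierarchical_division_meets_partition_general {X : Type} [DecidableEq X]
    (S : Finset X)
    (Υ : BTree X) (hroot : Υ.leaves = S)
    (𝒞 : Finset (Finset X)) (hpart : IsPartitionOf 𝒞 S) (hne : 𝒞 ≠ {S}) :
    ∃ C₁ ∈ 𝒞, ∃ C₂ ∈ 𝒞, C₁ ≠ C₂ ∧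
      ∃ l r : BTree X, BTree.IsSubtree (BTree.node l r) Υ ∧
        l.leaves ⊆ C₁ ∧ r.leaves ⊆ C₂ := by
  have hcover : Υ.leaves ⊆ 𝒞.sup id := by rw [hroot, hpart.2.2]
  have hsplit : ¬ ∃ C ∈ 𝒞, Υ.leaves ⊆ C := fun ⟨C, hC, hSC⟩ =>
    hne (hpart.eq_singleton_of_subset hC (hroot ▸ hSC))
  exact Υ.exists_sibling_subsets_of_not_subset 𝒞 hcover hsplit

/-- Let `S` be a finite set with `|S| ≥ 2`, let `Υ` be any
hierarchical division of `S` (a full binary tree with root set `S`, leaves the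
singletons of `S`, and each internal node the disjoint union of its children),
and let `𝒞` be any partition of `S` other than `{S}`.  Then there exist
distinct parts `C₁, C₂ ∈ 𝒞` and subsets `C′₁ ⊆ C₁`, `C′₂ ⊆ C₂` such that `C′₁`
and `C′₂` are siblings in `Υ` (the sets of the two children of some internal node). -/
theorem hierarchical_division_meets_partition {X : Type} [DecidableEq X]
    (S : Finset X) (hS : 2 ≤ S.card)
    (Υ : BTree X) (hroot : Υ.leaves = S) (hdisj : Υ.DisjointLeaves)
    (𝒞 : Finset (Finset X)) (hpart : IsPartitionOf 𝒞 S) (hne : 𝒞 ≠ {S}) :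
    ∃ C₁ ∈ 𝒞, ∃ C₂ ∈ 𝒞, C₁ ≠ C₂ ∧
      ∃ l r : BTree X, BTree.IsSubtree (BTree.node l r) Υ ∧
        l.leaves ⊆ C₁ ∧ r.leaves ⊆ C₂ :=
  hierarchical_division_meets_partition_general S Υ hroot 𝒞 hpart hne
end

section
/- Let α be an assembly that is producible at temperature τ in the hierarchical model, with |dom α| ≥ 2, and let 𝒞 be any partition of dom α other than the trivial partition {dom α}. Then there exist two distinct parts Cᵢ, Cⱼ ∈ 𝒞 such that the total strength of interacting glues between tiles of α at positions in Cᵢ and adjacent positions in Cⱼ is at least τ. -/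
/-- A tile system over a type `T` of tile types: each tile type has, in each
direction (unit vector of `ℤ × ℤ`), a glue label (a natural number `ℕ`), and
each glue label has a nonnegative integer strength given by `str`. -/
structure TileSystem (T : Type) where
  glue : T → ℤ × ℤ → ℕ
  str : ℕ → ℕ

/-- The four unit-vector directions of `ℤ²`. -/
def dirs : Finset (ℤ × ℤ) := {(0,1), (0,-1), (1,0), (-1,0)}

/-- An assembly: a partial function from `ℤ²` to tile types. -/
abbrev Assembly (T : Type) := ℤ × ℤ → Option T

/-- `D` is the domain of the assembly `α`. -/
def IsDom {T : Type} (α : Assembly T) (D : Finset (ℤ × ℤ)) : Prop :=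
  ∀ p, (α p).isSome ↔ p ∈ D

/-- The strength of the bond between positions `p` and `q` in `α`: it is the
strength of the common glue if `q - p` is a unit direction and the glue of the
tile at `p` in direction `q - p` matches the glue of the tile at `q` in
direction `p - q`; otherwise `0`. -/
def bond {T : Type} (ts : TileSystem T) (α : Assembly T) (p q : ℤ × ℤ) : ℕ :=
  match α p, α q with
  | some t, some t' =>
      if q - p ∈ dirs ∧ ts.glue t (q - p) = ts.glue t' (p - q)
      then ts.str (ts.glue t (q - p)) else 0
  | _, _ => 0

/-- Two positions of `α` interact if they hold tiles binding with positive strength. -/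
def Interacts {T : Type} (ts : TileSystem T) (α : Assembly T) (p q : ℤ × ℤ) : Prop :=
  0 < bond ts α p q

/-- Total strength of the interacting glues between positions in `A` and
(adjacent) positions in `B`. -/
def strengthBetween {T : Type} (ts : TileSystem T) (α : Assembly T)
    (A B : Finset (ℤ × ℤ)) : ℕ :=
  ∑ p ∈ A, ∑ q ∈ B, bond ts α p q

/-- `α` is `τ`-stable: every partition of its domain into two nonempty parts is
crossed by interacting glues of total strength at least `τ`. -/
def Stable {T : Type} (ts : TileSystem T) (α : Assembly T) (τ : ℕ) : Prop :=
  ∀ D A B : Finset (ℤ × ℤ), IsDom α D → A ∪ B = D → Disjoint A B →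
    A.Nonempty → B.Nonempty → τ ≤ strengthBetween ts α A B

/-- The union of two assemblies (agreeing with `α` wherever `α` is defined). -/
def aunion {T : Type} (α β : Assembly T) : Assembly T :=
  fun p => match α p with
    | some t => some t
    | none => β p

/-- Producibility in the hierarchical model at temperature `τ`: an assembly is
producible if it is a single tile, or the `τ`-stable union of two producible
assemblies with disjoint domains. -/
inductive Producible {T : Type} (ts : TileSystem T) (τ : ℕ) : Assembly T → Prop where
  | single (p : ℤ × ℤ) (t : T) :
      Producible ts τ (fun q => if q = p then some t else none)
  | union {α β : Assembly T} :
      Producible ts τ α → Producible ts τ β →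
      (∀ p, α p = none ∨ β p = none) →
      Stable ts (aunion α β) τ →
      Producible ts τ (aunion α β)

/-- Two assemblies are consistent if they agree wherever both are defined. -/
def Consistent {T : Type} (α β : Assembly T) : Prop :=
  ∀ p t t', α p = some t → β p = some t' → t = t'

/-- `α` is a subassembly of `β`. -/
def Subassembly {T : Type} (α β : Assembly T) : Prop :=
  ∀ p t, α p = some t → β p = some t

/-- A producible assembly is terminal if no producible assembly can stably attach to it. -/
def Terminal {T : Type} (ts : TileSystem T) (τ : ℕ) (α : Assembly T) : Prop :=
  ∀ β : Assembly T, Producible ts τ β → (∀ p, α p = none ∨ β p = none) →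
    ¬ Stable ts (aunion α β) τ

/-- The hierarchical system uniquely produces `α` if the set of producible
terminal assemblies equals `{α}`. -/
def UniquelyProduces {T : Type} (ts : TileSystem T) (τ : ℕ) (α : Assembly T) : Prop :=
  {γ : Assembly T | Producible ts τ γ ∧ Terminal ts τ γ} = {α}

/-- `𝒞` is a partition of the finite set `D`: pairwise disjoint nonempty parts
whose union is `D`. -/
def IsPartition (𝒞 : Finset (Finset (ℤ × ℤ))) (D : Finset (ℤ × ℤ)) : Prop :=
  (∀ C ∈ 𝒞, C.Nonempty) ∧
  (∀ C₁ ∈ 𝒞, ∀ C₂ ∈ 𝒞, C₁ ≠ C₂ → Disjoint C₁ C₂) ∧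
  𝒞.sup id = D

/-!
Induct on the assembly tree of `α`, proving the claim for every family `𝒞` that covers the
domain without containing it in a single part. A single tile lies in one part. For
`α = β ∪ γ`, if the domain of `β` (or of `γ`) meets two parts, its own mergeable pair stays
mergeable in `α`, since bonds of `β` are bonds of `α`. Otherwise `dom β ⊆ C₁` and
`dom γ ⊆ C₂` with `C₁ ≠ C₂`, and the `τ`-stability of the cut `(dom β, dom γ)` of `α` bounds
the strength between `C₁` and `C₂`.
-/

section

variable {T : Type} {ts : TileSystem T} {τ : ℕ}

lemma IsDom.unique {α : Assembly T} {D D' : Finset (ℤ × ℤ)} (hD : IsDom α D)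
    (hD' : IsDom α D') : D = D' :=
  Finset.ext fun p => (hD p).symm.trans (hD' p)

lemma isDom_single (p : ℤ × ℤ) (t : T) :
    IsDom (fun q => if q = p then some t else none) {p} := by
  intro q
  by_cases h : q = p <;> simp [h]

lemma isDom_aunion {β γ : Assembly T} {Dβ Dγ : Finset (ℤ × ℤ)} (hβ : IsDom β Dβ)
    (hγ : IsDom γ Dγ) : IsDom (aunion β γ) (Dβ ∪ Dγ) := by
  intro p
  rw [Finset.mem_union, ← hβ p, ← hγ p]
  unfold aunion
  cases β p <;> simp

lemma Producible.exists_isDom {α : Assembly T} (h : Producible ts τ α) :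
    ∃ D, IsDom α D ∧ D.Nonempty := by
  induction h with
  | single p t => exact ⟨{p}, isDom_single p t, Finset.singleton_nonempty p⟩
  | union _ _ _ _ ihβ ihγ =>
    obtain ⟨Dβ, hβ, hβne⟩ := ihβ
    obtain ⟨Dγ, hγ, -⟩ := ihγ
    exact ⟨Dβ ∪ Dγ, isDom_aunion hβ hγ, hβne.mono Finset.subset_union_left⟩

lemma IsDom.disjoint {β γ : Assembly T} {Dβ Dγ : Finset (ℤ × ℤ)}
    (hdisj : ∀ p, β p = none ∨ γ p = none) (hβ : IsDom β Dβ) (hγ : IsDom γ Dγ) :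
    Disjoint Dβ Dγ := by
  refine Finset.disjoint_left.2 fun p hpβ hpγ => ?_
  rw [← hβ p] at hpβ
  rw [← hγ p] at hpγ
  rcases hdisj p with h | h <;> simp [h] at hpβ hpγ

lemma Subassembly.aunion_left (β γ : Assembly T) : Subassembly β (aunion β γ) := by
  intro p t h
  simp [aunion, h]

lemma Subassembly.aunion_right {β γ : Assembly T} (hdisj : ∀ p, β p = none ∨ γ p = none) :
    Subassembly γ (aunion β γ) := by
  intro p t h
  rcases hdisj p with hβ | hγ
  · simp [aunion, hβ, h]
  · simp [hγ] at h

lemma Subassembly.bond_le {β α : Assembly T} (h : Subassembly β α) (p q : ℤ × ℤ) :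
    bond ts β p q ≤ bond ts α p q := by
  unfold bond
  cases hp : β p with
  | none => exact Nat.zero_le _
  | some t =>
    cases hq : β q with
    | none => exact Nat.zero_le _
    | some t' => rw [h p t hp, h q t' hq]

lemma Subassembly.strengthBetween_le {β α : Assembly T} (h : Subassembly β α)
    (A B : Finset (ℤ × ℤ)) : strengthBetween ts β A B ≤ strengthBetween ts α A B :=
  Finset.sum_le_sum fun p _ => Finset.sum_le_sum fun q _ => h.bond_le p q

lemma strengthBetween_mono (α : Assembly T) {A A' B B' : Finset (ℤ × ℤ)} (hA : A ⊆ A')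
    (hB : B ⊆ B') : strengthBetween ts α A B ≤ strengthBetween ts α A' B' :=
  calc ∑ p ∈ A, ∑ q ∈ B, bond ts α p q
      ≤ ∑ p ∈ A, ∑ q ∈ B', bond ts α p q :=
        Finset.sum_le_sum fun _ _ => Finset.sum_le_sum_of_subset hB
    _ ≤ ∑ p ∈ A', ∑ q ∈ B', bond ts α p q := Finset.sum_le_sum_of_subset hA

def HasMergeablePair (ts : TileSystem T) (τ : ℕ) (α : Assembly T)
    (𝒞 : Finset (Finset (ℤ × ℤ))) : Prop :=
  ∃ C₁ ∈ 𝒞, ∃ C₂ ∈ 𝒞, C₁ ≠ C₂ ∧ τ ≤ strengthBetween ts α C₁ C₂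

lemma Subassembly.hasMergeablePair {β α : Assembly T} (h : Subassembly β α)
    {𝒞 : Finset (Finset (ℤ × ℤ))} (hβ : HasMergeablePair ts τ β 𝒞) :
    HasMergeablePair ts τ α 𝒞 := by
  obtain ⟨C₁, hC₁, C₂, hC₂, hne, hτ⟩ := hβ
  exact ⟨C₁, hC₁, C₂, hC₂, hne, hτ.trans (h.strengthBetween_le C₁ C₂)⟩

theorem Producible.hasMergeablePair {α : Assembly T} (h : Producible ts τ α)
    {D : Finset (ℤ × ℤ)} (hD : IsDom α D) {𝒞 : Finset (Finset (ℤ × ℤ))}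
    (hcover : ∀ p ∈ D, ∃ C ∈ 𝒞, p ∈ C) (hsplit : ∀ C ∈ 𝒞, ¬ D ⊆ C) :
    HasMergeablePair ts τ α 𝒞 := by
  induction h generalizing D with
  | single p t =>
    obtain rfl := hD.unique (isDom_single p t)
    obtain ⟨C, hC, hpC⟩ := hcover p (Finset.mem_singleton_self p)
    exact absurd (Finset.singleton_subset_iff.2 hpC) (hsplit C hC)
  | @union β γ hβprod hγprod hdisj hstable ihβ ihγ =>
    obtain ⟨Dβ, hβ, hβne⟩ := hβprod.exists_isDom
    obtain ⟨Dγ, hγ, hγne⟩ := hγprod.exists_isDom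
    obtain rfl := hD.unique (isDom_aunion hβ hγ)
    by_cases hsplitβ : ∀ C ∈ 𝒞, ¬ Dβ ⊆ C
    · exact (Subassembly.aunion_left β γ).hasMergeablePair
        (ihβ hβ (fun p hp => hcover p (Finset.mem_union_left _ hp)) hsplitβ)
    by_cases hsplitγ : ∀ C ∈ 𝒞, ¬ Dγ ⊆ C
    · exact (Subassembly.aunion_right hdisj).hasMergeablePair
        (ihγ hγ (fun p hp => hcover p (Finset.mem_union_right _ hp)) hsplitγ)
    push Not at hsplitβ hsplitγ
    obtain ⟨C₁, hC₁, hβC₁⟩ := hsplitβ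
    obtain ⟨C₂, hC₂, hγC₂⟩ := hsplitγ
    have hC₁₂ : C₁ ≠ C₂ := by
      rintro rfl
      exact hsplit C₁ hC₁ (Finset.union_subset hβC₁ hγC₂)
    refine ⟨C₁, hC₁, C₂, hC₂, hC₁₂, ?_⟩
    calc τ ≤ strengthBetween ts (aunion β γ) Dβ Dγ :=
          hstable _ Dβ Dγ (isDom_aunion hβ hγ) rfl (hβ.disjoint hdisj hγ) hβne hγne
      _ ≤ strengthBetween ts (aunion β γ) C₁ C₂ := strengthBetween_mono _ hβC₁ hγC₂

lemma IsPartition.not_subset_part {𝒞 : Finset (Finset (ℤ × ℤ))} {D : Finset (ℤ × ℤ)}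
    (hpart : IsPartition 𝒞 D) (hne : 𝒞 ≠ {D}) : ∀ C ∈ 𝒞, ¬ D ⊆ C := by
  obtain ⟨hnonempty, hdisj, hsup⟩ := hpart
  have hle : ∀ C ∈ 𝒞, C ⊆ D := fun C hC => hsup ▸ Finset.le_sup (f := id) hC
  intro C hC hDC
  obtain rfl : C = D := Finset.Subset.antisymm (hle C hC) hDC
  refine hne (Finset.eq_singleton_iff_unique_mem.2 ⟨hC, fun C' hC' => ?_⟩)
  by_contra hC'C
  obtain ⟨p, hp⟩ := hnonempty C' hC'
  exact Finset.disjoint_left.1 (hdisj C' hC' C hC hC'C) hp (hle C' hC' hp)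

end

theorem mergeable_pair_exists_general {T : Type} (ts : TileSystem T)
    (τ : ℕ) (α : Assembly T) (hprod : Producible ts τ α)
    (D : Finset (ℤ × ℤ)) (hD : IsDom α D)
    (𝒞 : Finset (Finset (ℤ × ℤ))) (hpart : IsPartition 𝒞 D) (hne : 𝒞 ≠ {D}) :
    ∃ C₁ ∈ 𝒞, ∃ C₂ ∈ 𝒞, C₁ ≠ C₂ ∧ τ ≤ strengthBetween ts α C₁ C₂ := by
  have hcover : ∀ p ∈ D, ∃ C ∈ 𝒞, p ∈ C := fun p hp =>
    Finset.mem_sup.1 (hpart.2.2 ▸ hp)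
  exact hprod.hasMergeablePair hD hcover (hpart.not_subset_part hne)

/-- If `α` is producible at temperature `τ` in the hierarchical
model, `|dom α| ≥ 2`, and `𝒞` is any partition of `dom α` other than `{dom α}`,
then some two distinct parts of `𝒞` have attachment strength at least `τ` in `α`. -/
theorem mergeable_pair_exists {T : Type} [Fintype T] (ts : TileSystem T)
    (τ : ℕ) (hτ : 0 < τ) (α : Assembly T) (hprod : Producible ts τ α)
    (D : Finset (ℤ × ℤ)) (hD : IsDom α D) (hcard : 2 ≤ D.card)
    (𝒞 : Finset (Finset (ℤ × ℤ))) (hpart : IsPartition 𝒞 D) (hne : 𝒞 ≠ {D}) :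
    ∃ C₁ ∈ 𝒞, ∃ C₂ ∈ 𝒞, C₁ ≠ C₂ ∧ τ ≤ strengthBetween ts α C₁ C₂ :=
  mergeable_pair_exists_general ts τ α hprod D hD 𝒞 hpart hne
end

section
/- For every full binary tree with n ≥ 1 leaves, the sum over all internal nodes u of min(ℓ(u), r(u)), where ℓ(u) and r(u) denote the number of leaves in the left and right subtrees of u respectively, is at most n · log₂ n. -/
/-!
Charge the cost `min ℓ r` of a node to the leaves of its smaller side: the subtree containing
such a leaf at least doubles in size at that node, so every leaf is charged at most `log₂ n` times.
In the induction this is the inequality `a + a log₂ a ≤ a log₂ (a + b)` for `a ≤ b`.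
-/

/-- An unlabeled full binary tree: every internal node has exactly two children. -/
inductive FBT where
  | leaf : FBT
  | node : FBT → FBT → FBT

/-- The number of leaves of a full binary tree. -/
def FBT.numLeaves : FBT → ℕ
  | .leaf => 1
  | .node l r => l.numLeaves + r.numLeaves

/-- The sum, over all internal nodes `u`, of `min (ℓ u) (r u)`, where `ℓ u` and
`r u` are the numbers of leaves of the left and right subtrees of `u`. -/
def FBT.mergeCost : FBT → ℕ
  | .leaf => 0
  | .node l r => min l.numLeaves r.numLeaves + l.mergeCost + r.mergeCost

open Real

lemma FBT.numLeaves_pos : ∀ t : FBT, 0 < t.numLeaves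
  | .leaf => Nat.one_pos
  | .node l _ => Nat.add_pos_left l.numLeaves_pos _

lemma min_add_mul_logb_add_mul_logb_le {a b : ℝ} (ha : 0 < a) (hb : 0 < b) :
    min a b + a * logb 2 a + b * logb 2 b ≤ (a + b) * logb 2 (a + b) := by
  wlog hab : a ≤ b generalizing a b
  · have := this hb ha (le_of_not_ge hab)
    rw [min_comm, add_comm a b]
    linarith
  have hdouble : a + a * logb 2 a = a * logb 2 (2 * a) := by
    rw [logb_mul two_ne_zero ha.ne', logb_self_eq_one one_lt_two]
    ring
  calc min a b + a * logb 2 a + b * logb 2 b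
      = a * logb 2 (2 * a) + b * logb 2 b := by rw [min_eq_left hab, hdouble]
    _ ≤ a * logb 2 (a + b) + b * logb 2 (a + b) := by
      gcongr <;> linarith
    _ = (a + b) * logb 2 (a + b) := by ring

/-- For every full binary tree with `n ≥ 1` leaves, the sum
over all internal nodes `u` of `min (ℓ u) (r u)` is at most `n · log₂ n`. -/
theorem mergeCost_le_n_log_n (t : FBT) :
    (t.mergeCost : ℝ) ≤ (t.numLeaves : ℝ) * Real.logb 2 (t.numLeaves : ℝ) := by
  induction t with
  | leaf => simp [FBT.mergeCost, FBT.numLeaves]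
  | node l r ihl ihr =>
    have hnode := min_add_mul_logb_add_mul_logb_le
      (Nat.cast_pos.2 l.numLeaves_pos : (0 : ℝ) < l.numLeaves) (Nat.cast_pos.2 r.numLeaves_pos)
    push_cast [FBT.mergeCost, FBT.numLeaves]
    linarith
end
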